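/- arXiv:0907.1980 — 8 statements merged into one kernel-verified Lean document; each statement's English description precedes it below -/
import Mathlib

section
/- Every isolated point of the structured ε-pseudospectrum Λ_{S,ε}(A) is an eigenvalue of A. -/
/-!
Write `lam ∈ spectrum (A + M)` with `M = MS S z`, `‖z‖ ≤ ε`. For `t ∈ [0, 1]` the spectrum of
`A + t M` stays inside `Λ_{S,ε}(A)`, so once `lam` is `δ`-isolated there, the value
`f t = det (lam - A - t M) = ∏ (lam - r)` over the eigenvalues `r` of `A + t M` is either `0` or
of modulus at least `δ ^ n`. This gap and the connectedness of `[0, 1]` force the continuous `f`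
to vanish on all of `[0, 1]` since `f 1 = 0`; `f 0 = 0` says `lam ∈ spectrum A`.
-/

open Matrix Polynomial Set

noncomputable def MS {n : ℕ} (S : Finset (Fin n × Fin n))
    (z : EuclideanSpace ℂ {p : Fin n × Fin n // p ∈ S}) : Matrix (Fin n) (Fin n) ℂ :=
  fun i j => if h : (i, j) ∈ S then z ⟨(i, j), h⟩ else 0

/-- The structured ε-pseudospectrum `Λ_{S,ε}(A)`. -/
noncomputable def structPseudo {n : ℕ} (A : Matrix (Fin n) (Fin n) ℂ)
    (S : Finset (Fin n × Fin n)) (ε : ℝ) : Set ℂ :=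
  ⋃ z ∈ {z : EuclideanSpace ℂ {p : Fin n × Fin n // p ∈ S} | ‖z‖ ≤ ε},
    spectrum ℂ (A + MS S z)

/-- The strict structured ε-pseudospectrum `Λ'_{S,ε}(A)`. -/
noncomputable def structPseudoStrict {n : ℕ} (A : Matrix (Fin n) (Fin n) ℂ)
    (S : Finset (Fin n × Fin n)) (ε : ℝ) : Set ℂ :=
  ⋃ z ∈ {z : EuclideanSpace ℂ {p : Fin n × Fin n // p ∈ S} | ‖z‖ < ε},
    spectrum ℂ (A + MS S z)

theorem Polynomial.Splits.pow_natDegree_le_norm_eval {K : Type*} [NormedField K] {p : K[X]}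
    (hp : p.Splits) (hm : p.Monic) {x : K} {δ : ℝ} (hδ : 0 ≤ δ)
    (h : ∀ r ∈ p.roots, δ ≤ ‖x - r‖) : δ ^ p.natDegree ≤ ‖p.eval x‖ := by
  rw [hp.eval_eq_prod_roots_of_monic hm, ← normHom_apply, map_multiset_prod, Multiset.map_map,
    hp.natDegree_eq_card_roots, ← Multiset.prod_replicate, ← Multiset.map_const']
  exact Multiset.prod_map_le_prod_map₀ _ _ (fun _ _ ↦ hδ) h

theorem Matrix.pow_card_le_norm_eval_charpoly {ι K : Type*} [Fintype ι] [DecidableEq ι]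
    [NormedField K] [IsAlgClosed K] (B : Matrix ι ι K) {μ : K} {δ : ℝ} (hδ : 0 ≤ δ)
    (h : ∀ r ∈ spectrum K B, δ ≤ ‖μ - r‖) : δ ^ Fintype.card ι ≤ ‖B.charpoly.eval μ‖ := by
  rw [← B.charpoly_natDegree_eq_dim]
  exact (IsAlgClosed.splits _).pow_natDegree_le_norm_eval B.charpoly_monic hδ fun r hr ↦
    h r (mem_spectrum_iff_isRoot_charpoly.mpr (isRoot_of_mem_roots hr))

theorem IsPreconnected.eqOn_zero_of_norm_gap {X E : Type*} [TopologicalSpace X]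
    [SeminormedAddCommGroup E] {s : Set X} (hs : IsPreconnected s) {f : X → E}
    (hf : ContinuousOn f s) {c : ℝ} (hc : 0 < c) (hgap : ∀ x ∈ s, f x = 0 ∨ c ≤ ‖f x‖)
    {a : X} (ha : a ∈ s) (hfa : f a = 0) : EqOn f 0 s := by
  intro x hx
  by_contra hfx
  have hcx : c ≤ ‖f x‖ := (hgap x hx).resolve_left hfx
  obtain ⟨y, hy, hfy⟩ : ∃ y ∈ s, ‖f y‖ = c / 2 :=
    hs.intermediate_value ha hx hf.norm ⟨by simp only [hfa, norm_zero]; positivity, by linarith⟩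
  rcases hgap y hy with h | h
  · rw [h, norm_zero] at hfy; linarith
  · linarith

theorem MS_smul {n : ℕ} (S : Finset (Fin n × Fin n)) (c : ℂ)
    (z : EuclideanSpace ℂ {p : Fin n × Fin n // p ∈ S}) : MS S (c • z) = c • MS S z := by
  ext i j
  simp only [MS, Matrix.smul_apply]
  split <;> simp

theorem spectrum_subset_structPseudo {n : ℕ} (A : Matrix (Fin n) (Fin n) ℂ)
    {S : Finset (Fin n × Fin n)} {ε : ℝ} {z : EuclideanSpace ℂ {p : Fin n × Fin n // p ∈ S}}
    (hz : ‖z‖ ≤ ε) : spectrum ℂ (A + MS S z) ⊆ structPseudo A S ε :=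
  subset_biUnion_of_mem (u := fun z ↦ spectrum ℂ (A + MS S z)) hz

theorem spectrum_add_smul_subset_structPseudo {n : ℕ} (A : Matrix (Fin n) (Fin n) ℂ)
    {S : Finset (Fin n × Fin n)} {ε : ℝ} {z : EuclideanSpace ℂ {p : Fin n × Fin n // p ∈ S}}
    (hz : ‖z‖ ≤ ε) {t : ℝ} (ht : t ∈ Icc (0 : ℝ) 1) :
    spectrum ℂ (A + (t : ℂ) • MS S z) ⊆ structPseudo A S ε := by
  rw [← MS_smul]
  refine spectrum_subset_structPseudo A ?_
  rw [norm_smul, Complex.norm_real, Real.norm_of_nonneg ht.1]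
  nlinarith [norm_nonneg z, ht.2]

theorem isolated_point_mem_spectrum_general {n : ℕ} (A : Matrix (Fin n) (Fin n) ℂ)
    (S : Finset (Fin n × Fin n)) (ε : ℝ) (lam : ℂ)
    (hmem : lam ∈ structPseudo A S ε)
    (hiso : ∃ U ∈ nhds lam, U ∩ structPseudo A S ε = {lam}) :
    lam ∈ spectrum ℂ A := by
  obtain ⟨z, hz, hlam⟩ := mem_iUnion₂.mp hmem
  obtain ⟨U, hU, hUΛ⟩ := hiso
  obtain ⟨δ, hδ, hball⟩ := Metric.mem_nhds_iff.mp hU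
  have hfar : ∀ r ∈ structPseudo A S ε, r ≠ lam → δ ≤ ‖lam - r‖ := fun r hr hne ↦ by
    by_contra! hlt
    exact hne (hUΛ.subset ⟨hball (by rwa [mem_ball_iff_norm']), hr⟩)
  set f : ℝ → ℂ := fun t ↦ (A + (t : ℂ) • MS S z).charpoly.eval lam
  have hf : Continuous f := by
    simp only [f, eval_charpoly]
    fun_prop
  have hgap : ∀ t ∈ Icc (0 : ℝ) 1, f t = 0 ∨ δ ^ n ≤ ‖f t‖ := fun t ht ↦ by
    refine or_iff_not_imp_left.mpr fun hft ↦ ?_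
    simpa only [Fintype.card_fin] using
      (A + (t : ℂ) • MS S z).pow_card_le_norm_eval_charpoly hδ.le fun r hr ↦
        hfar r (spectrum_add_smul_subset_structPseudo A hz ht hr) fun hr' ↦
          hft (mem_spectrum_iff_isRoot_charpoly.mp (hr' ▸ hr))
  have hf1 : f 1 = 0 := by
    simpa [f, mem_spectrum_iff_isRoot_charpoly] using hlam
  have hf0 := isPreconnected_Icc.eqOn_zero_of_norm_gap hf.continuousOn (pow_pos hδ n) hgap
    (right_mem_Icc.mpr zero_le_one) hf1 (left_mem_Icc.mpr zero_le_one)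
  simpa [f, mem_spectrum_iff_isRoot_charpoly] using hf0

/-- Every isolated point of the structured ε-pseudospectrum is an eigenvalue of A. -/
theorem isolated_point_mem_spectrum {n : ℕ} (A : Matrix (Fin n) (Fin n) ℂ)
    (S : Finset (Fin n × Fin n)) (ε : ℝ) (hε : 0 < ε) (lam : ℂ)
    (hmem : lam ∈ structPseudo A S ε)
    (hiso : ∃ U ∈ nhds lam, U ∩ structPseudo A S ε = {lam}) :
    lam ∈ spectrum ℂ A :=
  isolated_point_mem_spectrum_general A S ε lam hmem hiso
end

section
/- The closure of the strict structured ε-pseudospectrum equals the structured ε-pseudospectrum: closure(Λ'_{S,ε}(A)) = Λ_{S,ε}(A). -/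
/-!
`Λ_{S,ε}(A)` is the union of the spectra of `A + M_S z` over the compact ball `‖z‖ ≤ ε`. Such a
union is closed: it is the projection along a compact factor of the closed set of pairs `(z, μ)`
with `χ_{A + M_S z}(μ) = 0`. Conversely, the closed ball is the closure of the open one, and
spectra are lower semicontinuous: if every eigenvalue of `B` is at distance `≥ δ` from `μ`, then
`|χ_B(μ)| = ∏ |μ - λᵢ| ≥ δⁿ`, a closed condition on `B` that fails where `μ` is an eigenvalue.
-/

open Matrix Polynomial Set

lemma continuous_MS {n : ℕ} (S : Finset (Fin n × Fin n)) : Continuous (MS S) := by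
  refine continuous_matrix fun i j => ?_
  by_cases h : (i, j) ∈ S
  · simp only [MS, h, dif_pos]
    fun_prop
  · simpa only [MS, h, dif_neg, not_false_iff] using continuous_const

namespace Matrix

variable {ι : Type*} [Fintype ι] [DecidableEq ι]

lemma pow_card_le_nnnorm_eval_charpoly (B : Matrix ι ι ℂ) {μ : ℂ} {δ : NNReal}
    (h : ∀ ν ∈ spectrum ℂ B, δ ≤ ‖μ - ν‖₊) : δ ^ Fintype.card ι ≤ ‖B.charpoly.eval μ‖₊ := by
  have hsplits : B.charpoly.Splits := IsAlgClosed.splits _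
  have hcard : Multiset.card B.charpoly.roots = Fintype.card ι := by
    rw [splits_iff_card_roots.mp hsplits, charpoly_natDegree_eq_dim]
  rw [hsplits.eval_eq_prod_roots_of_monic B.charpoly_monic, ← nnnormHom_apply,
    map_multiset_prod, Multiset.map_map, ← hcard, ← Multiset.card_map (‖μ - ·‖₊)]
  refine Multiset.pow_card_le_prod fun x hx => ?_
  obtain ⟨ν, hν, rfl⟩ := Multiset.mem_map.mp hx
  exact h ν (mem_spectrum_iff_isRoot_charpoly.mpr (isRoot_of_mem_roots hν))

lemma continuous_eval_charpoly :
    Continuous fun p : Matrix ι ι ℂ × ℂ => p.1.charpoly.eval p.2 := by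
  simp only [eval_charpoly, scalar_apply]
  exact (((continuous_pi fun _ => continuous_snd).matrix_diagonal).sub continuous_fst).matrix_det

variable {X : Type*} [TopologicalSpace X] {F : X → Matrix ι ι ℂ}

lemma isClosed_biUnion_spectrum (hF : Continuous F) {K : Set X} (hK : IsCompact K) :
    IsClosed (⋃ x ∈ K, spectrum ℂ (F x)) := by
  have : CompactSpace K := isCompact_iff_compactSpace.mp hK
  have hroots : IsClosed {p : K × ℂ | (F p.1).charpoly.eval p.2 = 0} :=
    isClosed_eq (continuous_eval_charpoly.comp
      ((hF.comp continuous_subtype_val).prodMap continuous_id)) continuous_const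
  convert isClosedMap_snd_of_compactSpace _ hroots
  ext μ
  simp [mem_spectrum_iff_isRoot_charpoly]

lemma spectrum_subset_closure_biUnion_spectrum (hF : Continuous F) {s : Set X} {x : X}
    (hx : x ∈ closure s) : spectrum ℂ (F x) ⊆ closure (⋃ y ∈ s, spectrum ℂ (F y)) := by
  intro μ hμ
  refine Metric.mem_closure_iff.mpr fun δ hδ => ?_
  by_contra! hfar
  lift δ to NNReal using hδ.le
  have hbound : s ⊆ {y | δ ^ Fintype.card ι ≤ ‖(F y).charpoly.eval μ‖₊} := fun y hy =>
    pow_card_le_nnnorm_eval_charpoly _ fun ν hν => by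
      simpa [← NNReal.coe_le_coe, dist_eq_norm] using hfar ν (mem_biUnion hy hν)
  have hclosed : IsClosed {y | δ ^ Fintype.card ι ≤ ‖(F y).charpoly.eval μ‖₊} :=
    isClosed_le continuous_const
      (continuous_nnnorm.comp (continuous_eval_charpoly.comp (hF.prodMk continuous_const)))
  have hμx := closure_minimal hbound hclosed hx
  rw [mem_ofPred_eq, (mem_spectrum_iff_isRoot_charpoly.mp hμ).eq_zero, nnnorm_zero,
    nonpos_iff_eq_zero] at hμx
  exact (pow_pos (NNReal.coe_pos.mp hδ) _).ne' hμx

end Matrix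

/-- The closure of the strict structured ε-pseudospectrum equals the structured
ε-pseudospectrum. -/
theorem closure_structPseudoStrict {n : ℕ} (A : Matrix (Fin n) (Fin n) ℂ)
    (S : Finset (Fin n × Fin n)) (ε : ℝ) (hε : 0 < ε) :
    closure (structPseudoStrict A S ε) = structPseudo A S ε := by
  have hF : Continuous fun z => A + MS S z := continuous_const.add (continuous_MS S)
  have hstrict : structPseudoStrict A S ε = ⋃ z ∈ Metric.ball 0 ε, spectrum ℂ (A + MS S z) := by
    simp [structPseudoStrict]
  have hclosed : structPseudo A S ε = ⋃ z ∈ Metric.closedBall 0 ε, spectrum ℂ (A + MS S z) := by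
    simp [structPseudo]
  rw [hstrict, hclosed]
  apply Subset.antisymm
  · exact closure_minimal (biUnion_subset_biUnion_left Metric.ball_subset_closedBall)
      (isClosed_biUnion_spectrum hF (isCompact_closedBall 0 ε))
  · refine iUnion₂_subset fun z hz => spectrum_subset_closure_biUnion_spectrum hF ?_
    rwa [closure_ball _ hε.ne']
end

section
/- Let f be a monic complex polynomial of degree n ≥ 1 with r distinct roots. Then the nullity of the Sylvester resultant matrix R(f, f') of f and its derivative f' equals n − r. Equivalently, the number of distinct roots of f is n − ν(R(f,f')). -/
open Polynomial Matrix

/-!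
Up to transposition and reordering of rows and columns, `R(f, f')` is the matrix of the linear map
`(p, q) ↦ f q + f' p` on pairs with `deg p < n`, `deg q < n - 1` (Mathlib's `sylvesterMap`), so the
nullity of `R(f, f')` is the dimension of its kernel. Writing `f = d f₁`, `f' = d g₁` with
`d = gcd(f, f')` and `f₁, g₁` coprime, the kernel consists of the pairs `(-f₁ c, g₁ c)` with
`deg c < deg d`; hence the nullity is `deg d`. A root of `f` of multiplicity `k` is a root of `f'`
of multiplicity `k - 1`, hence of `d` of multiplicity `k - 1`, and summing over the `r` distinct
roots gives `deg d = n - r`.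
-/

/-- The Sylvester resultant matrix `R(f, f')` of a monic polynomial `f` of degree `n` and its
derivative: a `(2n-1) × (2n-1)` matrix whose first `n-1` rows are the shifted coefficient rows
of `f` and whose last `n` rows are the shifted coefficient rows of `f'`. -/
noncomputable def sylvFf' (n : ℕ) (f : Polynomial ℂ) :
    Matrix (Fin (2 * n - 1)) (Fin (2 * n - 1)) ℂ := fun i j =>
  if (i : ℕ) < n - 1 then
    -- row of `f` starting at column `i`: entries `f.coeff (n - (j - i))` for `i ≤ j ≤ i + n`
    (if (i : ℕ) ≤ (j : ℕ) ∧ (j : ℕ) ≤ (i : ℕ) + n then f.coeff (n - ((j : ℕ) - (i : ℕ))) else 0)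
  else
    -- row of `f'` starting at column `i - (n-1)`
    (let i' := (i : ℕ) - (n - 1)
     if i' ≤ (j : ℕ) ∧ (j : ℕ) ≤ i' + (n - 1) then
       (Polynomial.derivative f).coeff ((n - 1) - ((j : ℕ) - i')) else 0)

open Module

theorem IsCoprime.exists_eq_of_mul_add_mul_eq_zero {R : Type*} [CommRing R] [IsDomain R]
    {a b x y : R} (hab : IsCoprime a b) (hb : b ≠ 0) (h : a * y + b * x = 0) :
    ∃ c, x = -(a * c) ∧ y = b * c := by
  obtain ⟨c, rfl⟩ : b ∣ y := hab.symm.dvd_of_dvd_mul_left ⟨-x, by linear_combination h⟩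
  exact ⟨c, mul_left_cancel₀ hb (by linear_combination h), rfl⟩

namespace Polynomial

variable {K : Type*} [Field K]

theorem finrank_degreeLT (n : ℕ) : finrank K K[X]_n = n :=
  (degreeLTEquiv K n).finrank_eq.trans (finrank_fin_fun K)

theorem mul_mem_degreeLT_iff {p : K[X]} (hp : p ≠ 0) {q : K[X]} {k : ℕ} :
    p * q ∈ K[X]_(p.natDegree + k) ↔ q ∈ K[X]_k := by
  rw [mem_degreeLT, mem_degreeLT, degree_mul, degree_eq_natDegree hp, Nat.cast_add]
  exact WithBot.add_lt_add_iff_left (WithBot.natCast_ne_bot _)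

theorem rank_sylvester_eq_finrank_range {f g : K[X]} {m n : ℕ} (hf : f.natDegree ≤ m)
    (hg : g.natDegree ≤ n) :
    (sylvester f g m n).rank = finrank K (LinearMap.range (sylvesterMap f g hf hg)) := by
  rw [← toMatrix_sylvesterMap' f g hf hg, rank_eq_finrank_range_toLin _ (degreeLT.basis K _)
    (((degreeLT.basis K m).prod (degreeLT.basis K n)).reindex finSumFinEquiv), toLin_toMatrix]

variable [DecidableEq K]

theorem finrank_ker_sylvesterMap {f g : K[X]} {m n : ℕ} (hf0 : f ≠ 0) (hg0 : g ≠ 0)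
    (hf : f.natDegree = m) (hg : g.natDegree = n) :
    finrank K (LinearMap.ker (sylvesterMap f g hf.le hg.le)) = (gcd f g).natDegree := by
  obtain ⟨f₁, g₁, hf₁, hg₁, hunit⟩ := extract_gcd f g
  set d := gcd f g
  have hd0 : d ≠ 0 := gcd_ne_zero_of_left hf0
  have hf₁0 : f₁ ≠ 0 := right_ne_zero_of_mul (hf₁ ▸ hf0)
  have hg₁0 : g₁ ≠ 0 := right_ne_zero_of_mul (hg₁ ▸ hg0)
  have hcop : IsCoprime f₁ g₁ := (gcd_isUnit_iff f₁ g₁).1 hunit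
  have hm : m = f₁.natDegree + d.natDegree := by
    rw [← hf, hf₁, natDegree_mul hd0 hf₁0, add_comm]
  have hn : n = g₁.natDegree + d.natDegree := by
    rw [← hg, hg₁, natDegree_mul hd0 hg₁0, add_comm]
  have hsyl : ∀ x, (sylvesterMap f g hf.le hg.le x : K[X]) = d * (f₁ * x.2 + g₁ * x.1) :=
    fun x => by rw [sylvesterMap_apply_coe, hf₁, hg₁]; ring
  let incl : K[X]_m × K[X]_n →ₗ[K] K[X] × K[X] := (K[X]_m).subtype.prodMap (K[X]_n).subtype
  have hincl : Function.Injective incl :=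
    Prod.map_injective.2 ⟨Subtype.val_injective, Subtype.val_injective⟩
  let φ : K[X] →ₗ[K] K[X] × K[X] := (-LinearMap.mulLeft K f₁).prod (LinearMap.mulLeft K g₁)
  have hφ : Function.Injective φ := fun c c' h => mul_left_cancel₀ hg₁0 (congrArg Prod.snd h)
  have hker : (LinearMap.ker (sylvesterMap f g hf.le hg.le)).map incl =
      (K[X]_d.natDegree).map φ := by
    ext x
    simp only [Submodule.mem_map, LinearMap.mem_ker]
    constructor
    · rintro ⟨⟨⟨p, hp⟩, ⟨q, hq⟩⟩, hpq, rfl⟩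
      have hpq := congrArg Subtype.val hpq
      rw [hsyl, ZeroMemClass.coe_zero] at hpq
      obtain ⟨c, rfl, rfl⟩ :=
        hcop.exists_eq_of_mul_add_mul_eq_zero hg₁0 ((mul_eq_zero.1 hpq).resolve_left hd0)
      rw [hn, mul_mem_degreeLT_iff hg₁0] at hq
      exact ⟨c, hq, rfl⟩
    · rintro ⟨c, hc, rfl⟩
      have hp : -(f₁ * c) ∈ K[X]_m := by
        rw [hm]; exact neg_mem ((mul_mem_degreeLT_iff hf₁0).2 hc)
      have hq : g₁ * c ∈ K[X]_n := by
        rw [hn]; exact (mul_mem_degreeLT_iff hg₁0).2 hc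
      refine ⟨(⟨_, hp⟩, ⟨_, hq⟩), Subtype.ext ?_, rfl⟩
      rw [hsyl, ZeroMemClass.coe_zero]
      ring
  rw [(Submodule.equivMapOfInjective incl hincl _).finrank_eq, hker,
    ← (Submodule.equivMapOfInjective φ hφ _).finrank_eq, finrank_degreeLT]

theorem rank_sylvester_add_natDegree_gcd {f g : K[X]} {m n : ℕ} (hf0 : f ≠ 0) (hg0 : g ≠ 0)
    (hf : f.natDegree = m) (hg : g.natDegree = n) :
    (sylvester f g m n).rank + (gcd f g).natDegree = m + n := by
  rw [rank_sylvester_eq_finrank_range hf.le hg.le, ← finrank_ker_sylvesterMap hf0 hg0 hf hg,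
    LinearMap.finrank_range_add_finrank_ker, finrank_prod, finrank_degreeLT, finrank_degreeLT]

theorem rootMultiplicity_gcd {p q : K[X]} (hp : p ≠ 0) (hq : q ≠ 0) (t : K) :
    (gcd p q).rootMultiplicity t = min (p.rootMultiplicity t) (q.rootMultiplicity t) :=
  eq_of_forall_le_iff fun k => by
    rw [le_min_iff, le_rootMultiplicity_iff (gcd_ne_zero_of_left hp), dvd_gcd_iff,
      le_rootMultiplicity_iff hp, le_rootMultiplicity_iff hq]

variable [CharZero K]

theorem rootMultiplicity_gcd_derivative {p : K[X]} (hp : p ≠ 0) (t : K) :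
    (gcd p (derivative p)).rootMultiplicity t = p.rootMultiplicity t - 1 := by
  by_cases ht : p.IsRoot t
  · have hp' : derivative p ≠ 0 := by
      rw [Ne, derivative_eq_zero, ← Ne, ← pos_iff_ne_zero, natDegree_pos_iff_degree_pos]
      exact degree_pos_of_root hp ht
    rw [rootMultiplicity_gcd hp hp', derivative_rootMultiplicity_of_root ht]
    omega
  · have := rootMultiplicity_le_rootMultiplicity_of_dvd hp (gcd_dvd_left p (derivative p)) t
    rw [rootMultiplicity_eq_zero ht] at this ⊢
    omega

theorem roots_gcd_derivative {p : K[X]} (hp : p ≠ 0) :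
    (gcd p (derivative p)).roots = p.roots - p.roots.dedup := by
  ext t
  rw [count_roots, rootMultiplicity_gcd_derivative hp, Multiset.count_sub, Multiset.count_dedup,
    count_roots]
  split_ifs with ht
  · rfl
  · rw [← count_roots, Multiset.count_eq_zero.2 ht]

theorem natDegree_gcd_derivative [IsAlgClosed K] {p : K[X]} (hp : p ≠ 0) :
    (gcd p (derivative p)).natDegree = p.natDegree - p.roots.toFinset.card := by
  rw [← IsAlgClosed.card_roots_eq_natDegree, roots_gcd_derivative hp,
    Multiset.card_sub (Multiset.dedup_le _), Multiset.card_toFinset,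
    IsAlgClosed.card_roots_eq_natDegree]

end Polynomial

-- `sylvFf'` lists coefficients by decreasing degree with the `f`-rows first, Mathlib's `sylvester`
-- by increasing degree with the `f'`-columns first: reversing both indices matches them.
theorem sylvFf'_eq_transpose_sylvester (n : ℕ) (f : ℂ[X]) :
    sylvFf' n f = ((sylvester f (derivative f) n (n - 1)).submatrix
      (Fin.revPerm.trans (finCongr (by omega))) (Fin.revPerm.trans (finCongr (by omega))))ᵀ := by
  ext i j
  simp only [sylvFf', sylvester, Fin.addCases, transpose_apply, submatrix_apply, of_apply,
    eq_rec_constant]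
  simp only [Fin.val_fin_le, tsub_le_iff_right, Equiv.trans_apply, Fin.revPerm_apply,
    finCongr_apply, Fin.val_cast, Fin.val_rev, Fin.val_castLT, Set.mem_Icc, Fin.cast_cast,
    Fin.val_subNat, dite_eq_ite]
  split_ifs <;> first | rfl | omega | (congr 1; omega)

theorem rank_sylvFf' (n : ℕ) (f : ℂ[X]) :
    (sylvFf' n f).rank = (sylvester f (derivative f) n (n - 1)).rank := by
  rw [sylvFf'_eq_transpose_sylvester, rank_transpose, rank_submatrix]

theorem nullity_sylvester_eq_general {n : ℕ} (hn : 1 ≤ n) (f : Polynomial ℂ)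
    (hdeg : f.natDegree = n) (r : ℕ) (hr : r = f.roots.toFinset.card) :
    (2 * n - 1) - (sylvFf' n f).rank = n - r := by
  have hf0 : f ≠ 0 := ne_zero_of_natDegree_gt (hdeg ▸ hn)
  have hf'0 : derivative f ≠ 0 := by
    rw [Ne, derivative_eq_zero]
    omega
  have hrank := rank_sylvester_add_natDegree_gcd hf0 hf'0 hdeg
    (by rw [natDegree_derivative, hdeg])
  have hgcd := natDegree_gcd_derivative hf0
  rw [rank_sylvFf']
  omega

/-- The nullity of the Sylvester resultant matrix `R(f, f')` equals `n - r`, where `r` is the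
number of distinct roots of the monic degree-`n` polynomial `f`. -/
theorem nullity_sylvester_eq {n : ℕ} (hn : 1 ≤ n) (f : Polynomial ℂ) (hf : f.Monic)
    (hdeg : f.natDegree = n) (r : ℕ) (hr : r = f.roots.toFinset.card) :
    (2 * n - 1) - (sylvFf' n f).rank = n - r :=
  nullity_sylvester_eq_general hn f hdeg r hr
end

section
/- Let f be a monic complex polynomial of degree n, and for 1 ≤ k ≤ n+1 let d_k := deg gcd(f, f', …, f^{(k)}) (with d₀ := deg f = n). Then the number N_k of distinct roots of f of multiplicity ≥ k satisfies N_k = d_{k−1} − d_k for all 1 ≤ k ≤ n. -/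
/-!
In characteristic zero each derivative lowers a positive root multiplicity by exactly one, so a
root `α` of multiplicity `m_α` has multiplicity `m_α - k` (truncated) in `gcd(f, f′, …, f^{(k)})`.
Since `f` splits over `ℂ`, summing gives `d_k = ∑_α (m_α - k)`, and each summand drops by one from
`d_{k-1}` to `d_k` exactly when `k ≤ m_α`.
-/

open Polynomial

noncomputable def gcdDerivs (f : Polynomial ℂ) : ℕ → Polynomial ℂ
  | 0 => f
  | (k+1) => EuclideanDomain.gcd (gcdDerivs f k) (Polynomial.derivative^[k+1] f)

namespace Polynomial

theorem natDegree_iterate_derivative_eq {R : Type*} [Semiring R] [IsAddTorsionFree R]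
    (p : R[X]) (k : ℕ) : (derivative^[k] p).natDegree = p.natDegree - k := by
  induction k with
  | zero => rfl
  | succ k ih => rw [Function.iterate_succ_apply', natDegree_derivative, ih, Nat.sub_sub]

theorem iterate_derivative_ne_zero {R : Type*} [Semiring R] [IsAddTorsionFree R]
    {p : R[X]} (hp : p ≠ 0) {k : ℕ} (hk : k ≤ p.natDegree) : derivative^[k] p ≠ 0 := by
  cases k with
  | zero => exact hp
  | succ k =>
    rw [Function.iterate_succ_apply', Ne, derivative_eq_zero, natDegree_iterate_derivative_eq]
    omega

theorem rootMultiplicity_iterate_derivative {R : Type*} [CommRing R] [NoZeroDivisors R]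
    [CharZero R] {p : R[X]} {t : R} {j : ℕ} (hj : j ≤ p.rootMultiplicity t) :
    (derivative^[j] p).rootMultiplicity t = p.rootMultiplicity t - j := by
  induction j with
  | zero => rfl
  | succ j ih =>
    have hpos : 0 < (derivative^[j] p).rootMultiplicity t := by rw [ih (by omega)]; omega
    rw [Function.iterate_succ_apply',
      derivative_rootMultiplicity_of_root (rootMultiplicity_pos'.1 hpos).2, ih (by omega)]
    omega

theorem rootMultiplicity_euclideanGcd {K : Type*} [Field K] [DecidableEq K[X]] {p q : K[X]}
    (hp : p ≠ 0) (hq : q ≠ 0) (t : K) :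
    (EuclideanDomain.gcd p q).rootMultiplicity t =
      min (p.rootMultiplicity t) (q.rootMultiplicity t) := by
  have hg : EuclideanDomain.gcd p q ≠ 0 := fun h => hp (EuclideanDomain.gcd_eq_zero_iff.1 h).1
  refine eq_of_forall_le_iff fun n => ?_
  rw [le_min_iff, le_rootMultiplicity_iff hg, le_rootMultiplicity_iff hp,
    le_rootMultiplicity_iff hq]
  exact ⟨fun h => ⟨h.trans (EuclideanDomain.gcd_dvd_left p q),
    h.trans (EuclideanDomain.gcd_dvd_right p q)⟩, fun h => EuclideanDomain.dvd_gcd h.1 h.2⟩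

theorem natDegree_eq_sum_rootMultiplicity {K : Type*} [Field K] [IsAlgClosed K] (p : K[X])
    {s : Finset K} (hs : ∀ a ∈ p.roots, a ∈ s) :
    p.natDegree = ∑ a ∈ s, p.rootMultiplicity a := by
  classical
  simp_rw [← count_roots, Multiset.sum_count_eq_card hs]
  exact (IsAlgClosed.splits p).natDegree_eq_card_roots

end Polynomial

theorem Finset.sum_tsub_sub_sum_tsub_succ {ι : Type*} (s : Finset ι) (m : ι → ℕ) (k : ℕ) :
    ∑ i ∈ s, (m i - k) - ∑ i ∈ s, (m i - (k + 1)) = {i ∈ s | k + 1 ≤ m i}.card := by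
  have hsplit : ∀ i ∈ s, m i - k = (m i - (k + 1)) + if k + 1 ≤ m i then 1 else 0 := by
    intro i _
    split <;> omega
  rw [Finset.sum_congr rfl hsplit, Finset.sum_add_distrib, Nat.add_sub_cancel_left,
    Finset.sum_boole, Nat.cast_id]

theorem gcdDerivs_dvd (f : ℂ[X]) (k : ℕ) : gcdDerivs f k ∣ f := by
  induction k with
  | zero => exact dvd_rfl
  | succ k ih => exact (EuclideanDomain.gcd_dvd_left _ _).trans ih

theorem gcdDerivs_ne_zero {f : ℂ[X]} (hf : f ≠ 0) (k : ℕ) : gcdDerivs f k ≠ 0 :=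
  fun h => hf (zero_dvd_iff.1 (h ▸ gcdDerivs_dvd f k))

theorem rootMultiplicity_gcdDerivs {f : ℂ[X]} (hf : f ≠ 0) {k : ℕ} (hk : k ≤ f.natDegree)
    (a : ℂ) : (gcdDerivs f k).rootMultiplicity a = f.rootMultiplicity a - k := by
  induction k with
  | zero => rfl
  | succ k ih =>
    rw [gcdDerivs, rootMultiplicity_euclideanGcd (gcdDerivs_ne_zero hf k)
      (iterate_derivative_ne_zero hf hk), ih (by omega)]
    rcases le_or_gt (k + 1) (f.rootMultiplicity a) with h | h
    · rw [rootMultiplicity_iterate_derivative h]; omega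
    · omega

theorem natDegree_gcdDerivs {f : ℂ[X]} (hf : f ≠ 0) {k : ℕ} (hk : k ≤ f.natDegree) :
    (gcdDerivs f k).natDegree = ∑ a ∈ f.roots.toFinset, (f.rootMultiplicity a - k) := by
  rw [natDegree_eq_sum_rootMultiplicity _ fun a ha => Multiset.mem_toFinset.2 <|
    Multiset.mem_of_le (roots.le_of_dvd hf (gcdDerivs_dvd f k)) ha]
  exact Finset.sum_congr rfl fun a _ => rootMultiplicity_gcdDerivs hf hk a

theorem card_roots_multiplicity_ge_general {n : ℕ} (f : Polynomial ℂ) (hdeg : f.natDegree = n) :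
    ∀ k, 1 ≤ k → k ≤ n →
      (f.roots.toFinset.filter (fun α => k ≤ f.rootMultiplicity α)).card =
        (gcdDerivs f (k - 1)).natDegree - (gcdDerivs f k).natDegree := by
  rintro k hk hkn
  obtain ⟨j, rfl⟩ : ∃ j, k = j + 1 := ⟨k - 1, by omega⟩
  have hf : f ≠ 0 := ne_zero_of_natDegree_gt (n := 0) (by omega)
  rw [Nat.add_sub_cancel, natDegree_gcdDerivs hf (by omega), natDegree_gcdDerivs hf (by omega),
    Finset.sum_tsub_sub_sum_tsub_succ]

/-- With `d_k := deg gcd(f, f′, …, f^{(k)})` (so `d₀ = deg f = n`), the number `N_k` of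
distinct roots of `f` of multiplicity `≥ k` satisfies `N_k = d_{k-1} - d_k` for `1 ≤ k ≤ n`. -/
theorem card_roots_multiplicity_ge {n : ℕ} (hn : 1 ≤ n) (f : Polynomial ℂ) (hf : f.Monic)
    (hdeg : f.natDegree = n) :
    ∀ k, 1 ≤ k → k ≤ n →
      (f.roots.toFinset.filter (fun α => k ≤ f.rootMultiplicity α)).card =
        (gcdDerivs f (k - 1)).natDegree - (gcdDerivs f k).natDegree :=
  card_roots_multiplicity_ge_general f hdeg
end

section
/- Let Ω be a connected topological space and S a set of continuous complex-valued functions on Ω such that the set S(t) := {f(t) : f ∈ S} ⊆ ℂ is finite and has the same cardinality for every t ∈ Ω. If f, g ∈ S satisfy f(t₀) = g(t₀) for some t₀ ∈ Ω, then f = g. -/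
/-!
Fix `t` and a transversal `T ⊆ S`, one function for each of the `m` values in `S(t)`. Continuity
keeps the values of the members of `T` pairwise distinct near `t`, so near `t` they already give
`m` distinct points of `S(s)`, hence all of it. A function `f ∈ S` with `f t = h t` for `h ∈ T`
stays away from the other members of `T` near `t`, so it coincides with `h` there. Thus
`{t | f t = g t}` is open; it is closed, so connectedness makes it everything.
-/

open Filter Topology Set

section

variable {Ω X : Type*} [TopologicalSpace Ω] [TopologicalSpace X] [T2Space X]

theorem eventually_injOn_eval {T : Set (Ω → X)} (hT : T.Finite) (hcont : ∀ f ∈ T, Continuous f)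
    {t : Ω} (hinj : InjOn (fun f => f t) T) : ∀ᶠ s in 𝓝 t, InjOn (fun f => f s) T := by
  have hpair : ∀ f ∈ T, ∀ g ∈ T, ∀ᶠ s in 𝓝 t, f s = g s → f = g := by
    intro f hf g hg
    by_cases hfg : f = g
    · exact Eventually.of_forall fun _ _ => hfg
    · have hne := ((hcont f hf).continuousAt.ne_iff_eventually_ne (hcont g hg).continuousAt).1
        (mt (hinj hf hg) hfg)
      filter_upwards [hne] with s hs heq using absurd heq hs
  filter_upwards [hT.eventually_all.2 fun f hf => hT.eventually_all.2 (hpair f hf)]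
    with s hs f hf g hg using hs f hf g hg

variable {S : Set (Ω → X)} {m : ℕ}

theorem eventually_image_eval_eq (hcont : ∀ f ∈ S, Continuous f)
    (hcard : ∀ t : Ω, ((fun f : Ω → X => f t) '' S).Finite ∧
      ((fun f : Ω → X => f t) '' S).ncard = m)
    {T : Set (Ω → X)} (hTS : T ⊆ S) {t : Ω} (hbij : BijOn (fun f => f t) T ((fun f => f t) '' S)) :
    ∀ᶠ s in 𝓝 t, (fun f => f s) '' T = (fun f => f s) '' S := by
  have hT : T.Finite := hbij.finite_iff_finite.2 (hcard t).1
  have hTcard : T.ncard = m := by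
    rw [← hbij.injOn.ncard_image, hbij.image_eq, (hcard t).2]
  filter_upwards [eventually_injOn_eval hT (fun f hf => hcont f (hTS hf)) hbij.injOn]
    with s hinj
  refine eq_of_subset_of_ncard_le (image_mono hTS) ?_ (hcard s).1
  rw [hinj.ncard_image, hTcard, (hcard s).2]

theorem eventually_eq_of_apply_eq (hcont : ∀ f ∈ S, Continuous f)
    (hcard : ∀ t : Ω, ((fun f : Ω → X => f t) '' S).Finite ∧
      ((fun f : Ω → X => f t) '' S).ncard = m)
    {f g : Ω → X} (hf : f ∈ S) (hg : g ∈ S) {t : Ω} (hfg : f t = g t) :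
    ∀ᶠ s in 𝓝 t, f s = g s := by
  obtain ⟨T, hTS, hbij⟩ := exists_subset_bijOn S (fun f => f t)
  have hT : T.Finite := hbij.finite_iff_finite.2 (hcard t).1
  have himage := eventually_image_eval_eq hcont hcard hTS hbij
  obtain ⟨h, hh, hht⟩ := hbij.surjOn (mem_image_of_mem _ hf)
  have hsheet : ∀ k ∈ S, k t = h t → ∀ᶠ s in 𝓝 t, k s = h s := by
    intro k hk hkt
    have havoid : ∀ h' ∈ T, ∀ᶠ s in 𝓝 t, h' ≠ h → k s ≠ h' s := by
      intro h' hh'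
      by_cases hh'h : h' = h
      · exact Eventually.of_forall fun _ hne => absurd hh'h hne
      · have hne : k t ≠ h' t := hkt ▸ fun heq => hh'h (hbij.injOn hh hh' heq).symm
        filter_upwards [((hcont k hk).continuousAt.ne_iff_eventually_ne
          (hcont h' (hTS hh')).continuousAt).1 hne] with s hs _ using hs
    filter_upwards [himage, hT.eventually_all.2 havoid] with s himage_s havoid_s
    obtain ⟨h', hh', hks⟩ : k s ∈ (fun f => f s) '' T := himage_s ▸ mem_image_of_mem _ hk
    by_contra hne
    exact havoid_s h' hh' (fun hh'h => hne (hh'h ▸ hks.symm)) hks.symm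
  filter_upwards [hsheet f hf hht.symm, hsheet g hg (hfg ▸ hht).symm] with s hfs hgs
  rw [hfs, hgs]

end

/-- If `S` is a family of continuous complex functions on a connected space `Ω` such that the
value set `S(t) = {f(t) : f ∈ S}` is finite with cardinality independent of `t`, then two
members of `S` agreeing at one point are equal. -/
theorem eq_of_agree_at_point {Ω : Type*} [TopologicalSpace Ω] [ConnectedSpace Ω]
    (S : Set (Ω → ℂ)) (hcont : ∀ f ∈ S, Continuous f) (m : ℕ)
    (hcard : ∀ t : Ω, ((fun f : Ω → ℂ => f t) '' S).Finite ∧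
      ((fun f : Ω → ℂ => f t) '' S).ncard = m)
    (f g : Ω → ℂ) (hf : f ∈ S) (hg : g ∈ S) (t₀ : Ω) (h₀ : f t₀ = g t₀) :
    f = g := by
  have hclopen : IsClopen {t | f t = g t} :=
    ⟨isClosed_eq (hcont f hf) (hcont g hg),
      isOpen_iff_mem_nhds.2 fun _ ht => eventually_eq_of_apply_eq hcont hcard hf hg ht⟩
  funext s
  exact (hclopen.eq_univ ⟨t₀, h₀⟩).superset (mem_univ s)
end

section
/- Let E be a topological space, 𝒜 : E → ℂ^{n×n} a continuous matrix function, t₀ ∈ E, and α₁,…,α_p the distinct eigenvalues of 𝒜(t₀). Let 0 < η < min_{i≠j} |αᵢ − αⱼ|/2. Then there is a neighborhood V of t₀ such that for all t ∈ V: (1) spectrum(𝒜(t)) ⊆ B(α₁,η) ∪ ⋯ ∪ B(α_p,η), and (2) for each k, the sum of the algebraic multiplicities of the eigenvalues of 𝒜(t) in B(α_k,η) equals the algebraic multiplicity of α_k as an eigenvalue of 𝒜(t₀). -/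
open scoped Classical
open Matrix Polynomial

open Filter Metric Topology

/-!
Enumerate the eigenvalues of `M`, with multiplicity, as `r : ι → ℂ` with
`M.charpoly = ∏ i, (X - C (r i))`. For `M` near `M₀` such enumerations are bounded, and the
relation "`r` enumerates the eigenvalues of `M`" is closed, so along any sequence `Mⱼ → M₀` the
enumerations have a subsequence converging to an enumeration of the eigenvalues of `M₀`. Hence near
`M₀` there are enumerations `r` of `M` and `s` of `M₀` with each `r i` within `η` of `s i`. Once the
eigenvalues `α k` of `M₀` are more than `2η` apart, `r i ∈ B(α k, η)` holds exactly when
`s i = α k`, which gives both the inclusion of the spectrum and the count of multiplicities.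
-/

theorem Multiset.exists_eq_map_univ_val_of_card_eq {α ι : Type*} [Fintype ι] {s : Multiset α}
    (h : card s = Fintype.card ι) : ∃ f : ι → α, s = Finset.univ.val.map f := by
  let e : ι ≃ Fin s.toList.length := (Fintype.equivFin ι).trans (finCongr (by simp [h]))
  refine ⟨s.toList.get ∘ e, ?_⟩
  rw [← map_map, map_univ_val_equiv, Fin.univ_val_map, List.ofFn_get, coe_toList]

namespace Polynomial

variable {R ι : Type*} [CommRing R] [IsDomain R] [Fintype ι]

theorem roots_prod_univ_X_sub_C (r : ι → R) :
    (∏ i, (X - C (r i))).roots = Finset.univ.val.map r := by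
  rw [roots_prod _ _ (Finset.prod_ne_zero_iff.2 fun i _ => X_sub_C_ne_zero (r i))]
  simp

theorem sum_rootMultiplicity_filter_eq_card (p : R[X]) (q : R → Prop) [DecidablePred q] :
    ∑ μ ∈ p.roots.toFinset.filter q, p.rootMultiplicity μ = Multiset.card (p.roots.filter q) := by
  rw [← Multiset.toFinset_sum_count_eq, Multiset.toFinset_filter]
  refine Finset.sum_congr rfl fun μ hμ => ?_
  rw [Multiset.count_filter_of_pos (Finset.mem_filter.1 hμ).2, count_roots]

theorem sum_rootMultiplicity_filter_prod_X_sub_C (r : ι → R) (q : R → Prop) [DecidablePred q] :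
    ∑ μ ∈ (∏ i, (X - C (r i))).roots.toFinset.filter q, (∏ i, (X - C (r i))).rootMultiplicity μ =
      (Finset.univ.filter fun i => q (r i)).card := by
  rw [sum_rootMultiplicity_filter_eq_card, roots_prod_univ_X_sub_C, Multiset.filter_map,
    Multiset.card_map]
  rfl

theorem rootMultiplicity_prod_X_sub_C (r : ι → R) (a : R) :
    (∏ i, (X - C (r i))).rootMultiplicity a = (Finset.univ.filter fun i => r i = a).card := by
  rw [← count_roots, roots_prod_univ_X_sub_C, Multiset.count_map]
  simp_rw [eq_comm (a := a)]
  rfl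

end Polynomial

namespace Matrix

variable {ι K : Type*} [Fintype ι] [DecidableEq ι] [Field K]

theorem exists_charpoly_eq_prod [IsAlgClosed K] (M : Matrix ι ι K) :
    ∃ r : ι → K, M.charpoly = ∏ i, (X - C (r i)) := by
  have hsplit := IsAlgClosed.splits M.charpoly
  obtain ⟨r, hr⟩ := Multiset.exists_eq_map_univ_val_of_card_eq (ι := ι)
    (hsplit.natDegree_eq_card_roots.symm.trans M.charpoly_natDegree_eq_dim)
  refine ⟨r, ?_⟩
  rw [hsplit.eq_prod_roots_of_monic M.charpoly_monic, hr, Multiset.map_map]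
  rfl

theorem spectrum_eq_range_of_charpoly_eq_prod {M : Matrix ι ι K} {r : ι → K}
    (hr : M.charpoly = ∏ i, (X - C (r i))) : spectrum K M = Set.range r := by
  ext μ
  rw [mem_spectrum_iff_isRoot_charpoly, hr, IsRoot.def, eval_prod, Finset.prod_eq_zero_iff]
  simp [sub_eq_zero, eq_comm]

theorem isClosed_setOf_charpoly_eq_prod [TopologicalSpace K] [IsTopologicalRing K] [T2Space K]
    [Infinite K] :
    IsClosed {q : Matrix ι ι K × (ι → K) | q.1.charpoly = ∏ i, (X - C (q.2 i))} := by
  have : {q : Matrix ι ι K × (ι → K) | q.1.charpoly = ∏ i, (X - C (q.2 i))} =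
      ⋂ z : K, {q | q.1.charpoly.eval z = (∏ i, (X - C (q.2 i))).eval z} := by
    ext q
    simpa only [Set.mem_ofPred_eq, Set.mem_iInter] using ⟨fun h z => by rw [h], Polynomial.funext⟩
  rw [this]
  refine isClosed_iInter fun z => isClosed_eq ?_ ?_ <;>
    simp only [eval_charpoly, eval_prod, eval_sub, eval_X, eval_C] <;> fun_prop

theorem exists_eventually_spectrum_subset_closedBall (M₀ : Matrix ι ι ℂ) :
    ∃ B, ∀ᶠ M in 𝓝 M₀, spectrum ℂ M ⊆ closedBall 0 B := by
  let := Matrix.linftyOpNormedRing (n := ι) (α := ℂ)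
  let := Matrix.linftyOpNormedAlgebra (n := ι) (α := ℂ) (R := ℂ)
  refine ⟨(‖M₀‖ + 1) * ‖(1 : Matrix ι ι ℂ)‖, ?_⟩
  filter_upwards [(continuous_norm.tendsto M₀).eventually (gt_mem_nhds (lt_add_one ‖M₀‖))]
    with M hM
  exact (spectrum.subset_closedBall_norm_mul M).trans
    (closedBall_subset_closedBall (mul_le_mul_of_nonneg_right hM.le (norm_nonneg _)))

theorem eventually_exists_charpoly_eq_prod_dist_lt (M₀ : Matrix ι ι ℂ) {ε : ℝ} (hε : 0 < ε) :
    ∀ᶠ M in 𝓝 M₀, ∃ r s : ι → ℂ, M.charpoly = ∏ i, (X - C (r i)) ∧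
      M₀.charpoly = ∏ i, (X - C (s i)) ∧ ∀ i, dist (r i) (s i) < ε := by
  -- `Matrix` is a type synonym and does not pick up this instance from `ι → ι → ℂ`.
  have : FirstCountableTopology (Matrix ι ι ℂ) :=
    inferInstanceAs (FirstCountableTopology (ι → ι → ℂ))
  obtain ⟨B, hB⟩ := M₀.exists_eventually_spectrum_subset_closedBall
  by_contra h
  obtain ⟨x, hx, hx'⟩ :=
    exists_seq_forall_of_frequently ((not_eventually.1 h).and_eventually hB)
  obtain ⟨hfar, hxB⟩ := forall_and.1 hx'
  choose r hr using fun j => (x j).exists_charpoly_eq_prod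
  have hbounded : ∀ j, r j ∈ Set.univ.pi fun _ => closedBall (0 : ℂ) B := fun j i _ =>
    hxB j (by rw [spectrum_eq_range_of_charpoly_eq_prod (hr j)]; exact Set.mem_range_self i)
  obtain ⟨s, -, φ, hφ, hrs⟩ :=
    (isCompact_univ_pi fun _ => isCompact_closedBall _ _).tendsto_subseq hbounded
  have hs := isClosed_setOf_charpoly_eq_prod.mem_of_tendsto
    ((hx.comp hφ.tendsto_atTop).prodMk_nhds hrs) (.of_forall fun j => hr (φ j))
  obtain ⟨J, hJ⟩ := (eventually_all.2 fun i =>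
    (tendsto_pi_nhds.1 hrs i).eventually (ball_mem_nhds (s i) hε)).exists
  exact hfar (φ J) ⟨r (φ J), s, hr _, hs, hJ⟩

end Matrix

theorem mem_ball_iff_eq_of_separated {X κ : Type*} [PseudoMetricSpace X] {α : κ → X} {η : ℝ}
    (hα : ∀ i j, i ≠ j → η < dist (α i) (α j) / 2) {x y : X} (hy : y ∈ Set.range α)
    (hxy : dist x y < η) (k : κ) : x ∈ ball (α k) η ↔ y = α k := by
  obtain ⟨j, rfl⟩ := hy
  refine ⟨fun hx => ?_, fun h => by rwa [mem_ball, ← h]⟩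
  by_contra hne
  have hsep := hα k j fun h => hne (congrArg α h).symm
  linarith [dist_triangle_left (α k) (α j) x, mem_ball.1 hx]

theorem spectrum_continuity_general {E : Type*} [TopologicalSpace E] {n p : ℕ}
    (𝒜 : E → Matrix (Fin n) (Fin n) ℂ) (hA : Continuous 𝒜) (t₀ : E)
    (α : Fin p → ℂ)
    (hspec : spectrum ℂ (𝒜 t₀) = Set.range α)
    (η : ℝ) (hη : 0 < η) (hη' : ∀ i j : Fin p, i ≠ j → η < ‖α i - α j‖ / 2) :
    ∃ V ∈ nhds t₀, ∀ t ∈ V,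
      (spectrum ℂ (𝒜 t) ⊆ ⋃ k : Fin p, Metric.ball (α k) η) ∧
      ∀ k : Fin p,
        ∑ μ ∈ (𝒜 t).charpoly.roots.toFinset.filter (fun μ => μ ∈ Metric.ball (α k) η),
          (𝒜 t).charpoly.rootMultiplicity μ =
        (𝒜 t₀).charpoly.rootMultiplicity (α k) := by
  have hsep : ∀ i j, i ≠ j → η < dist (α i) (α j) / 2 := by simpa only [dist_eq_norm] using hη'
  refine eventually_iff_exists_mem.1 ?_
  filter_upwards [hA.continuousAt.eventually ((𝒜 t₀).eventually_exists_charpoly_eq_prod_dist_lt hη)]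
    with t ⟨r, s, hr, hs, hrs⟩
  have hsα : ∀ i, s i ∈ Set.range α := by
    rw [← hspec, spectrum_eq_range_of_charpoly_eq_prod hs]
    exact Set.mem_range_self
  refine ⟨?_, fun k => ?_⟩
  · rw [spectrum_eq_range_of_charpoly_eq_prod hr]
    rintro _ ⟨i, rfl⟩
    obtain ⟨k, hk⟩ := hsα i
    exact Set.mem_iUnion.2 ⟨k, hk ▸ hrs i⟩
  · rw [hr, hs, sum_rootMultiplicity_filter_prod_X_sub_C, rootMultiplicity_prod_X_sub_C]
    exact congrArg Finset.card <| Finset.filter_congr fun i _ =>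
      mem_ball_iff_eq_of_separated hsep (hsα i) (hrs i) k

/-- Continuity of the spectrum: near `t₀` the eigenvalues of `𝒜(t)` stay in small balls around
the distinct eigenvalues `α₁, …, α_p` of `𝒜(t₀)`, and the total algebraic multiplicity inside
each ball is preserved. -/
theorem spectrum_continuity {E : Type*} [TopologicalSpace E] {n p : ℕ}
    (𝒜 : E → Matrix (Fin n) (Fin n) ℂ) (hA : Continuous 𝒜) (t₀ : E)
    (α : Fin p → ℂ) (hinj : Function.Injective α)
    (hspec : spectrum ℂ (𝒜 t₀) = Set.range α)
    (η : ℝ) (hη : 0 < η) (hη' : ∀ i j : Fin p, i ≠ j → η < ‖α i - α j‖ / 2) :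
    ∃ V ∈ nhds t₀, ∀ t ∈ V,
      (spectrum ℂ (𝒜 t) ⊆ ⋃ k : Fin p, Metric.ball (α k) η) ∧
      ∀ k : Fin p,
        ∑ μ ∈ (𝒜 t).charpoly.roots.toFinset.filter (fun μ => μ ∈ Metric.ball (α k) η),
          (𝒜 t).charpoly.rootMultiplicity μ =
        (𝒜 t₀).charpoly.rootMultiplicity (α k) :=
  spectrum_continuity_general 𝒜 hA t₀ α hspec η hη hη'
end

section
/- Let Z : ℝ → ℂ^{n×n} be a matrix function whose entries are polynomials in t. Then there is a finite (possibly empty) set F ⊂ ℝ such that the number of distinct eigenvalues of Z(t) equals u := max_{t∈ℝ} #spectrum(Z(t)) for all t ∈ ℝ∖F, and is strictly less than u for t ∈ F. -/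
open Matrix Polynomial Set

/-!
Let `q ∈ ℂ[t][X]` be the characteristic polynomial of `Z`, viewed as a polynomial in `X` over
`ℂ[t]`. Over the fraction field `ℂ(t)` the radical of `q` is separable; by Gauss's lemma its monic
normalization `g` has coefficients in `ℂ[t]`, divides `q`, and some power of `g` is divisible by
`q`. Hence for every `t` the eigenvalues of `Z(t)` are the roots of the specialization `g_t`,
which is monic of degree `u := deg g`, so there are at most `u` of them. The resultant `r` of `g`
and `g'` is a nonzero element of `ℂ[t]` lying in the ideal generated by `g` and `g'`; whenever
`r(t) ≠ 0` the polynomial `g_t` is separable and has exactly `u` roots. So the exceptional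
parameters are among the finitely many zeros of `r`.
-/

namespace Polynomial

section RootCount

variable {K : Type*} [Field K]

lemma setOf_isRoot_eq_roots_toFinset [DecidableEq K] {p : K[X]} (hp : p ≠ 0) :
    {x | p.IsRoot x} = (p.roots.toFinset : Set K) := by
  ext x
  simp [hp]

lemma ncard_setOf_isRoot_le {p : K[X]} (hp : p ≠ 0) : {x | p.IsRoot x}.ncard ≤ p.natDegree := by
  classical
  rw [setOf_isRoot_eq_roots_toFinset hp, ncard_coe_finset]
  exact (Multiset.toFinset_card_le _).trans (card_roots' p)

lemma ncard_setOf_isRoot_of_separable [IsAlgClosed K] {p : K[X]} (hp : p.Separable) :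
    {x | p.IsRoot x}.ncard = p.natDegree := by
  classical
  rw [setOf_isRoot_eq_roots_toFinset hp.ne_zero, ncard_coe_finset,
    Multiset.toFinset_card_of_nodup (nodup_roots hp),
    (IsAlgClosed.splits p).natDegree_eq_card_roots]

end RootCount

lemma isRoot_iff_of_dvd_of_dvd_pow {R : Type*} [CommRing R] [IsDomain R] {p q : R[X]} {N : ℕ}
    (hpq : p ∣ q) (hqp : q ∣ p ^ N) (x : R) : p.IsRoot x ↔ q.IsRoot x :=
  ⟨fun hp => hp.dvd hpq, fun hq => eq_zero_of_pow_eq_zero (by simpa using hq.dvd hqp)⟩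

section Resultant

variable {R : Type*} [CommRing R]

lemma resultant_derivative_ne_zero_of_separable_map {K : Type*} [Field K] {f : R[X]}
    {φ : R →+* K} (hφ : Function.Injective φ) (hf : (f.map φ).Separable) :
    f.resultant (derivative f) ≠ 0 := by
  have h : φ (f.resultant (derivative f)) ≠ 0 := by
    rw [← resultant_map_map, ← natDegree_map_eq_of_injective hφ f,
      ← natDegree_map_eq_of_injective hφ (derivative f), ← derivative_map]
    exact resultant_ne_zero _ _ hf
  exact (map_ne_zero_iff φ hφ).mp h

lemma separable_map_of_resultant_derivative_ne_zero {L : Type*} [Field L] {f : R[X]}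
    (hf : f.Monic) (ψ : R →+* L) (hr : ψ (f.resultant (derivative f)) ≠ 0) :
    (f.map ψ).Separable := by
  by_cases hdeg : f.natDegree = 0
  · rw [eq_one_of_monic_natDegree_zero hf hdeg, Polynomial.map_one]
    exact separable_one
  obtain ⟨a, b, -, -, hab⟩ :=
    exists_mul_add_mul_eq_C_resultant f (derivative f) le_rfl le_rfl (Or.inl hdeg)
  set c := ψ (f.resultant (derivative f))
  have hmap := congrArg (map ψ) hab
  simp only [Polynomial.map_add, Polynomial.map_mul, Polynomial.map_C, ← derivative_map] at hmap
  have hinv : C c⁻¹ * C c = 1 := by rw [← C_mul, inv_mul_cancel₀ hr, C_1]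
  exact ⟨C c⁻¹ * a.map ψ, C c⁻¹ * b.map ψ, by linear_combination C c⁻¹ * hmap + hinv⟩

end Resultant

open UniqueFactorizationMonoid in
lemma exists_monic_separable_dvd_dvd_pow {R : Type*} (K : Type*) [CommRing R] [IsDomain R]
    [IsIntegrallyClosed R] [Field K] [Algebra R K] [IsFractionRing R K] [PerfectField K]
    {f : R[X]} (hf : f.Monic) :
    ∃ g : R[X], g.Monic ∧ (g.map (algebraMap R K)).Separable ∧ g ∣ f ∧ ∃ N, f ∣ g ^ N := by
  classical
  obtain ⟨g, hg⟩ := IsIntegrallyClosed.eq_map_mul_C_of_dvd K hf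
    (radical_dvd_self (a := f.map (algebraMap R K)))
  set h := radical (f.map (algebraMap R K))
  have hlc : h.leadingCoeff ≠ 0 := leadingCoeff_ne_zero.mpr radical_ne_zero
  have hgh : g.map (algebraMap R K) = h * C h.leadingCoeff⁻¹ := by
    nth_rw 1 [← hg]
    rw [mul_assoc, ← C_mul, mul_inv_cancel₀ hlc, C_1, mul_one]
  have hassoc : Associated (g.map (algebraMap R K)) h :=
    hg ▸ associated_mul_unit_right _ _ (isUnit_C.mpr hlc.isUnit)
  have hgm : g.Monic := monic_of_injective (IsFractionRing.injective R K)
    (hgh ▸ monic_mul_leadingCoeff_inv radical_ne_zero)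
  obtain ⟨N, hN⟩ := exists_dvd_radical_self_pow (hf.map (algebraMap R K)).ne_zero
  refine ⟨g, hgm, (PerfectField.separable_iff_squarefree.mpr squarefree_radical).of_dvd
    hassoc.dvd, ?_, N, ?_⟩
  · exact (hf.dvd_iff_fraction_map_dvd_fraction_map (K := K) hgm).mp
      (hassoc.dvd.trans radical_dvd_self)
  · refine ((hgm.pow N).dvd_iff_fraction_map_dvd_fraction_map (K := K) hf).mp ?_
    rw [Polynomial.map_pow]
    exact hN.trans (hassoc.symm.pow_pow).dvd

end Polynomial

lemma Matrix.spectrum_map_eq_setOf_isRoot {n R L : Type*} [Fintype n] [DecidableEq n]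
    [CommRing R] [Field L] (M : Matrix n n R) (ψ : R →+* L) {g : R[X]} {N : ℕ}
    (hg : g ∣ M.charpoly) (hN : M.charpoly ∣ g ^ N) :
    spectrum L (M.map ψ) = {x | (g.map ψ).IsRoot x} := by
  ext x
  rw [mem_ofPred_eq, mem_spectrum_iff_isRoot_charpoly, charpoly_map]
  refine (isRoot_iff_of_dvd_of_dvd_pow (N := N) (map_dvd ψ hg) ?_ x).symm
  simpa only [Polynomial.map_pow] using map_dvd ψ hN

/-- For a matrix function `Z : ℝ → ℂ^{n×n}` whose entries are polynomials in `t`, there is a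
finite (possibly empty) set `F ⊆ ℝ` such that the number of distinct eigenvalues of `Z(t)` is a
constant `u = max_t #spectrum(Z(t))` off `F`, and strictly smaller on `F`. -/
theorem bifurcation_points_finite {n : ℕ} (P : Fin n → Fin n → Polynomial ℂ)
    (Z : ℝ → Matrix (Fin n) (Fin n) ℂ)
    (hZ : ∀ t : ℝ, ∀ i j, Z t i j = (P i j).eval (t : ℂ)) :
    ∃ (F : Set ℝ) (u : ℕ), F.Finite ∧
      (∀ t : ℝ, t ∉ F → (spectrum ℂ (Z t)).ncard = u) ∧
      (∀ t ∈ F, (spectrum ℂ (Z t)).ncard < u) := by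
  obtain ⟨g, hg, hsep, hgq, N, hqg⟩ :=
    exists_monic_separable_dvd_dvd_pow (FractionRing ℂ[X]) (charpoly_monic (of P))
  have hr := resultant_derivative_ne_zero_of_separable_map
    (IsFractionRing.injective ℂ[X] (FractionRing ℂ[X])) hsep
  have hspec (t : ℝ) : spectrum ℂ (Z t) = {x | (g.map (evalRingHom (t : ℂ))).IsRoot x} := by
    have hZt : Z t = (of P).map (evalRingHom (t : ℂ)) := by ext i j; simp [hZ]
    rw [hZt, spectrum_map_eq_setOf_isRoot _ _ hgq hqg]
  refine ⟨{t | (spectrum ℂ (Z t)).ncard ≠ g.natDegree}, g.natDegree, ?_,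
    fun t ht => not_not.mp ht, fun t ht => lt_of_le_of_ne ?_ ht⟩
  · refine ((finite_setOfPred_isRoot hr).preimage Complex.ofReal_injective.injOn).subset
      fun t ht => ?_
    by_contra hroot
    refine ht ?_
    rw [hspec, ncard_setOf_isRoot_of_separable
      (separable_map_of_resultant_derivative_ne_zero hg _ (by simpa using hroot)),
      hg.natDegree_map]
  · rw [hspec, ← hg.natDegree_map (evalRingHom (t : ℂ))]
    exact ncard_setOf_isRoot_le (hg.map _).ne_zero
end

section
/- Let A ∈ ℂ^{n×n}, ε > 0, and suppose the strict (unstructured) ε-pseudospectrum Λ'_ε(A) has connected components S₁,…,S_ρ. Define μ(ε,A) := max over i of the sum of algebraic multiplicities of the eigenvalues of A lying in Sᵢ, and for any X ∈ ℂ^{n×n} let m(X) := max over ξ ∈ spectrum(X) of the algebraic multiplicity of ξ. Let k be an integer with m(A) ≤ k ≤ n. Then sup{ε > 0 : μ(ε,A) ≤ k} ≤ min{‖X − A‖ : X ∈ ℂ^{n×n}, m(X) ≥ k+1}. -/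
open Matrix Polynomial Set
open scoped Classical

/-- The spectral (ℓ²-operator) norm of a complex matrix. -/
noncomputable def specNorm {n : ℕ} (M : Matrix (Fin n) (Fin n) ℂ) : ℝ :=
  ‖Matrix.toEuclideanCLM (𝕜 := ℂ) M‖

/-- The strict (unstructured) ε-pseudospectrum of `A` for the spectral norm. -/
noncomputable def strictPseudo {n : ℕ} (A : Matrix (Fin n) (Fin n) ℂ) (ε : ℝ) : Set ℂ :=
  {z : ℂ | ∃ X : Matrix (Fin n) (Fin n) ℂ, specNorm (X - A) < ε ∧ z ∈ spectrum ℂ X}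

/-- `μ(ε, A)`: the maximum, over the connected components `T` of `Λ'_ε(A)`, of the sum of the
algebraic multiplicities of the eigenvalues of `A` lying in `T`. -/
noncomputable def muEps {n : ℕ} (A : Matrix (Fin n) (Fin n) ℂ) (ε : ℝ) : ℕ :=
  sSup {m : ℕ | ∃ w ∈ strictPseudo A ε,
    m = ∑ α ∈ A.charpoly.roots.toFinset.filter
          (fun α => α ∈ connectedComponentIn (strictPseudo A ε) w),
        A.charpoly.rootMultiplicity α}

/-- `m(X)`: the maximum algebraic multiplicity of an eigenvalue of `X`. -/
noncomputable def maxMult {n : ℕ} (X : Matrix (Fin n) (Fin n) ℂ) : ℕ :=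
  sSup {m : ℕ | ∃ ξ ∈ spectrum ℂ X, m = X.charpoly.rootMultiplicity ξ}

/-!
If `‖X - A‖ < ε`, every matrix `N` of the (convex, hence connected) ball `‖N - A‖ < ε` has its
spectrum in the open set `Λ'_ε(A)`. Roots of characteristic polynomials move continuously
(Bolzano–Weierstrass on tuples of roots; a limit of root tuples is a root tuple of the limit
matrix), so the number of eigenvalues of `N`, with multiplicity, in a connected component `T`
of `Λ'_ε(A)` is locally constant on the ball, hence the same for `X` as for `A`. So every
eigenvalue of `X` has multiplicity at most `μ(ε, A)`, and a matrix with an eigenvalue of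
multiplicity `k + 1 > μ(ε, A)` is at distance at least `ε` from `A`.
-/

open Filter Topology
-- With these instances `‖M‖` is the spectral norm, and `specNorm M` unfolds to it.
open scoped Matrix.Norms.L2Operator

theorem isOpen_setOf_mem_spectrum_of_norm_sub_lt {𝕜 A : Type*} [NormedField 𝕜] [NormedRing A]
    [NormedAlgebra 𝕜 A] (a : A) (ε : ℝ) :
    IsOpen {z : 𝕜 | ∃ x : A, ‖x - a‖ < ε ∧ z ∈ spectrum 𝕜 x} := by
  refine isOpen_iff_mem_nhds.2 fun z ⟨x, hx, hz⟩ => ?_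
  have hshift : Continuous fun c : 𝕜 => ‖algebraMap 𝕜 A (c - z) + x - a‖ := by fun_prop
  filter_upwards [hshift.continuousAt.eventually_lt continuousAt_const (by simpa using hx)]
    with c hc
  exact ⟨_, hc, by simpa using (spectrum.add_mem_add_iff (s := c - z)).2 hz⟩

theorem isOpen_strictPseudo {n : ℕ} (A : Matrix (Fin n) (Fin n) ℂ) (ε : ℝ) :
    IsOpen (strictPseudo A ε) :=
  isOpen_setOf_mem_spectrum_of_norm_sub_lt A ε

theorem IsOpen.diff_connectedComponentIn {α : Type*} [TopologicalSpace α]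
    [LocallyConnectedSpace α] {F : Set α} (hF : IsOpen F) (x : α) :
    IsOpen (F \ connectedComponentIn F x) := by
  refine isOpen_iff_mem_nhds.2 fun y ⟨hyF, hyx⟩ => ?_
  filter_upwards [connectedComponentIn_mem_nhds (hF.mem_nhds hyF)] with z hz
  refine ⟨connectedComponentIn_subset _ _ hz, fun hzx => hyx ?_⟩
  rw [connectedComponentIn_eq hzx, ← connectedComponentIn_eq hz]
  exact mem_connectedComponentIn hyF

theorem eventually_card_filter_mem_eq {α ι κ : Type*} [TopologicalSpace α] [Fintype κ]
    {l : Filter ι} {r : ι → κ → α} {z : κ → α} (hr : Tendsto r l (𝓝 z)) {U V : Set α}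
    (hU : IsOpen U) (hV : IsOpen V) (hUV : Disjoint U V) (hz : ∀ i, z i ∈ U ∪ V) :
    ∀ᶠ j in l, (Finset.univ.filter (r j · ∈ U)).card = (Finset.univ.filter (z · ∈ U)).card := by
  have hside : ∀ i, ∀ᶠ j in l, (r j i ∈ U ↔ z i ∈ U) := fun i => by
    have hri := tendsto_pi_nhds.1 hr i
    rcases hz i with hzU | hzV
    · exact (hri.eventually_mem (hU.mem_nhds hzU)).mono fun j hj => iff_of_true hj hzU
    · exact (hri.eventually_mem (hV.mem_nhds hzV)).mono fun j hj =>
        iff_of_false (hUV.notMem_of_mem_right hj) (hUV.notMem_of_mem_right hzV)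
  filter_upwards [eventually_all.2 hside] with j hj
  exact congrArg Finset.card (Finset.filter_congr fun i _ => hj i)

namespace Polynomial

variable {R : Type*} [CommRing R] [IsDomain R]

noncomputable def numRootsIn (p : R[X]) (U : Set R) : ℕ :=
  Multiset.card (p.roots.filter (· ∈ U))

theorem sum_rootMultiplicity_filter_eq_numRootsIn (p : R[X]) (U : Set R) :
    ∑ α ∈ p.roots.toFinset.filter (· ∈ U), p.rootMultiplicity α = p.numRootsIn U := by
  rw [numRootsIn, ← Multiset.toFinset_sum_count_eq, Multiset.toFinset_filter]
  refine Finset.sum_congr rfl fun α hα => ?_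
  rw [Multiset.count_filter_of_pos (Finset.mem_filter.1 hα).2, count_roots]

theorem numRootsIn_le_natDegree (p : R[X]) (U : Set R) : p.numRootsIn U ≤ p.natDegree :=
  (Multiset.card_le_card (Multiset.filter_le _ _)).trans (card_roots' p)

theorem rootMultiplicity_le_numRootsIn (p : R[X]) {U : Set R} {a : R} (ha : a ∈ U) :
    p.rootMultiplicity a ≤ p.numRootsIn U := by
  rw [← count_roots, ← Multiset.count_filter_of_pos ha]
  exact Multiset.count_le_card _ _

theorem numRootsIn_eq_card_filter {p : R[X]} {n : ℕ} {r : Fin n → R}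
    (hr : p.roots = Finset.univ.val.map r) (U : Set R) :
    p.numRootsIn U = (Finset.univ.filter (r · ∈ U)).card := by
  rw [numRootsIn, hr, Multiset.filter_map, Multiset.card_map]
  rfl

end Polynomial

namespace Matrix

variable {n : ℕ}

theorem numRootsIn_charpoly_le (M : Matrix (Fin n) (Fin n) ℂ) (U : Set ℂ) :
    M.charpoly.numRootsIn U ≤ n :=
  (numRootsIn_le_natDegree _ U).trans (by rw [charpoly_natDegree_eq_dim, Fintype.card_fin])

theorem exists_charpoly_roots_eq_map (M : Matrix (Fin n) (Fin n) ℂ) :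
    ∃ r : Fin n → ℂ, M.charpoly.roots = Finset.univ.val.map r := by
  obtain ⟨l, hl⟩ : ∃ l : List ℂ, (l : Multiset ℂ) = M.charpoly.roots := Quotient.exists_rep _
  have hlen : l.length = n := by
    rw [← Multiset.coe_card, hl, IsAlgClosed.card_roots_eq_natDegree,
      charpoly_natDegree_eq_dim, Fintype.card_fin]
  subst hlen
  exact ⟨l.get, by rw [Fin.univ_val_map, List.ofFn_get, ← hl]⟩

variable {M : Matrix (Fin n) (Fin n) ℂ} {r : Fin n → ℂ}

theorem charpoly_eq_prod_of_roots_eq_map (hr : M.charpoly.roots = Finset.univ.val.map r) :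
    M.charpoly = ∏ i, (X - C (r i)) := by
  rw [← prod_multiset_X_sub_C_of_monic_of_roots_card_eq M.charpoly_monic
    IsAlgClosed.card_roots_eq_natDegree, hr, Multiset.map_map]
  rfl

theorem mem_spectrum_of_charpoly_roots_eq_map (hr : M.charpoly.roots = Finset.univ.val.map r)
    (i : Fin n) : r i ∈ spectrum ℂ M :=
  mem_spectrum_iff_isRoot_charpoly.2 <| isRoot_of_mem_roots <|
    hr ▸ Multiset.mem_map_of_mem r (Finset.mem_univ_val i)

theorem norm_le_of_charpoly_roots_eq_map (hr : M.charpoly.roots = Finset.univ.val.map r) :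
    ‖r‖ ≤ ‖M‖ * ‖(1 : Matrix (Fin n) (Fin n) ℂ)‖ :=
  (pi_norm_le_iff_of_nonneg (by positivity)).2 fun i =>
    spectrum.norm_le_norm_mul_of_mem (mem_spectrum_of_charpoly_roots_eq_map hr i)

theorem charpoly_roots_eq_map_of_tendsto {ι : Type*} {l : Filter ι} [l.NeBot]
    {N : ι → Matrix (Fin n) (Fin n) ℂ} {s : ι → Fin n → ℂ} (hN : Tendsto N l (𝓝 M))
    (hs : ∀ j, (N j).charpoly.roots = Finset.univ.val.map (s j)) (hr : Tendsto s l (𝓝 r)) :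
    M.charpoly.roots = Finset.univ.val.map r := by
  have hM : M.charpoly = ∏ i, (X - C (r i)) := by
    refine Polynomial.funext fun w =>
      tendsto_nhds_unique (f := fun j => (N j).charpoly.eval w) (l := l) ?_ ?_
    · simp_rw [eval_charpoly]
      exact ((continuous_const.sub continuous_id).matrix_det.tendsto M).comp hN
    · simp_rw [charpoly_eq_prod_of_roots_eq_map (hs _), eval_prod, eval_sub, eval_X, eval_C]
      exact ((continuous_finsetProd _ fun i _ =>
        continuous_const.sub (continuous_apply i)).tendsto r).comp hr
  rw [hM, show ∏ i, (X - C (r i)) = ((Finset.univ.val.map r).map fun a => X - C a).prod by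
    rw [Multiset.map_map]; rfl, roots_multiset_prod_X_sub_C]

theorem continuousAt_numRootsIn_charpoly {U V : Set ℂ} (hU : IsOpen U) (hV : IsOpen V)
    (hUV : Disjoint U V) (hM : spectrum ℂ M ⊆ U ∪ V) :
    ContinuousAt (fun N : Matrix (Fin n) (Fin n) ℂ => N.charpoly.numRootsIn U) M := by
  rw [ContinuousAt, nhds_discrete ℕ, tendsto_pure]
  by_contra h
  obtain ⟨N, hN, hNU⟩ := exists_seq_forall_of_frequently (not_eventually.1 h)
  choose s hs using fun j => (N j).exists_charpoly_roots_eq_map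
  have hbdd : ∀ᶠ j in atTop,
      s j ∈ Metric.closedBall 0 ((‖M‖ + 1) * ‖(1 : Matrix (Fin n) (Fin n) ℂ)‖) := by
    filter_upwards [hN.norm.eventually (gt_mem_nhds (lt_add_one ‖M‖))] with j hj
    exact mem_closedBall_zero_iff.2 ((norm_le_of_charpoly_roots_eq_map (hs j)).trans (by gcongr))
  obtain ⟨r, -, φ, hφ, hr⟩ :=
    tendsto_subseq_of_frequently_bounded Metric.isBounded_closedBall hbdd.frequently
  have hMr := charpoly_roots_eq_map_of_tendsto (hN.comp hφ.tendsto_atTop) (fun j => hs (φ j)) hr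
  obtain ⟨j, hj⟩ := (eventually_card_filter_mem_eq hr hU hV hUV fun i =>
    hM (mem_spectrum_of_charpoly_roots_eq_map hMr i)).exists
  exact hNU (φ j) <| by
    rw [numRootsIn_eq_card_filter (hs _), numRootsIn_eq_card_filter hMr]
    exact hj

theorem numRootsIn_charpoly_eq_of_mem_ball {A X : Matrix (Fin n) (Fin n) ℂ} {ε : ℝ}
    (hX : X ∈ Metric.ball A ε) {U V : Set ℂ} (hU : IsOpen U) (hV : IsOpen V)
    (hUV : Disjoint U V) (hΛ : strictPseudo A ε ⊆ U ∪ V) :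
    X.charpoly.numRootsIn U = A.charpoly.numRootsIn U :=
  (convex_ball A ε).isPreconnected.constant
    (fun N hN => (continuousAt_numRootsIn_charpoly hU hV hUV fun _ hz =>
      hΛ ⟨N, mem_ball_iff_norm.1 hN, hz⟩).continuousWithinAt)
    hX (Metric.mem_ball_self (Metric.pos_of_mem_ball hX))

end Matrix

theorem rootMultiplicity_charpoly_le_muEps {n : ℕ} {A X : Matrix (Fin n) (Fin n) ℂ} {ε : ℝ}
    (hX : specNorm (X - A) < ε) (ξ : ℂ) : X.charpoly.rootMultiplicity ξ ≤ muEps A ε := by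
  by_cases hξ : ξ ∈ strictPseudo A ε
  swap
  · rw [rootMultiplicity_eq_zero fun h => hξ ⟨X, hX, mem_spectrum_iff_isRoot_charpoly.2 h⟩]
    exact Nat.zero_le _
  have hΛ := isOpen_strictPseudo A ε
  set T := connectedComponentIn (strictPseudo A ε) ξ
  calc X.charpoly.rootMultiplicity ξ ≤ X.charpoly.numRootsIn T :=
        rootMultiplicity_le_numRootsIn _ (mem_connectedComponentIn hξ)
    _ = A.charpoly.numRootsIn T :=
        numRootsIn_charpoly_eq_of_mem_ball (mem_ball_iff_norm.2 hX) hΛ.connectedComponentIn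
          (hΛ.diff_connectedComponentIn ξ) disjoint_sdiff_right
          (by rw [union_sdiff_self]; exact subset_union_right)
    _ ≤ muEps A ε := by
        refine le_csSup ⟨n, ?_⟩ ⟨ξ, hξ, (sum_rootMultiplicity_filter_eq_numRootsIn _ _).symm⟩
        rintro _ ⟨w, -, rfl⟩
        rw [sum_rootMultiplicity_filter_eq_numRootsIn]
        exact numRootsIn_charpoly_le _ _

theorem muEps_le {n : ℕ} (A : Matrix (Fin n) (Fin n) ℂ) (ε : ℝ) : muEps A ε ≤ n := by
  refine csSup_le' ?_
  rintro _ ⟨w, -, rfl⟩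
  rw [sum_rootMultiplicity_filter_eq_numRootsIn]
  exact numRootsIn_charpoly_le _ _

theorem maxMult_le_muEps {n : ℕ} {A X : Matrix (Fin n) (Fin n) ℂ} {ε : ℝ}
    (hX : specNorm (X - A) < ε) : maxMult X ≤ muEps A ε := by
  refine csSup_le' ?_
  rintro _ ⟨ξ, -, rfl⟩
  exact rootMultiplicity_charpoly_le_muEps hX ξ

theorem le_maxMult_zero {n : ℕ} : n ≤ maxMult (0 : Matrix (Fin n) (Fin n) ℂ) := by
  rcases n with _ | n
  · exact Nat.zero_le _
  refine le_csSup ⟨n + 1, ?_⟩ ⟨0, by simp, ?_⟩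
  · rintro _ ⟨ξ, -, rfl⟩
    exact (rootMultiplicity_le_numRootsIn _ (mem_univ ξ)).trans (numRootsIn_charpoly_le _ _)
  · simpa using (rootMultiplicity_X_sub_C_pow (0 : ℂ) (n + 1)).symm

theorem dist_to_higher_multiplicity_general {n : ℕ} (A : Matrix (Fin n) (Fin n) ℂ) (k : ℕ) :
    sSup {ε : ℝ | 0 < ε ∧ muEps A ε ≤ k} ≤
      sInf {d : ℝ | ∃ X : Matrix (Fin n) (Fin n) ℂ, k + 1 ≤ maxMult X ∧
        d = specNorm (X - A)} := by
  have hinf : 0 ≤ sInf {d : ℝ | ∃ X : Matrix (Fin n) (Fin n) ℂ, k + 1 ≤ maxMult X ∧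
      d = specNorm (X - A)} :=
    Real.sInf_nonneg (by rintro _ ⟨X, -, rfl⟩; exact norm_nonneg _)
  rcases lt_or_ge k n with hkn | hnk
  · refine Real.sSup_le (fun ε ⟨_, hμ⟩ =>
      le_csInf ⟨_, 0, hkn.trans_le le_maxMult_zero, rfl⟩ ?_) hinf
    rintro _ ⟨X, hX, rfl⟩
    by_contra! hlt
    have := maxMult_le_muEps hlt
    omega
  -- For `n ≤ k` no matrix qualifies, and both sides are the junk value `0`.
  · have hall : {ε : ℝ | 0 < ε ∧ muEps A ε ≤ k} = Ioi 0 := by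
      ext ε
      exact ⟨And.left, fun hε => ⟨hε, (muEps_le A ε).trans hnk⟩⟩
    rw [hall, Real.sSup_of_not_bddAbove (not_bddAbove_Ioi 0)]
    exact hinf

/-- Lower bound for the distance from `A` to the set of matrices having an eigenvalue of
multiplicity at least `k+1`. -/
theorem dist_to_higher_multiplicity {n : ℕ} (hn : 1 ≤ n) (A : Matrix (Fin n) (Fin n) ℂ)
    (k : ℕ) (hk₁ : maxMult A ≤ k) (hk₂ : k ≤ n) :
    sSup {ε : ℝ | 0 < ε ∧ muEps A ε ≤ k} ≤
      sInf {d : ℝ | ∃ X : Matrix (Fin n) (Fin n) ℂ, k + 1 ≤ maxMult X ∧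
        d = specNorm (X - A)} :=
  dist_to_higher_multiplicity_general A k
end
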